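/- arXiv:1803.05410 — 2 statements merged into one kernel-verified Lean document; each statement's English description precedes it below -/
import Mathlib

section
/- Let p, q = 1-p be complementary orthogonal projections on h, N ≥ 2, P_k the k-excitation projections on h^⊗N, and m̂ = Σ_{k=0}^N (k/N) P_k. Define m̂^{-1} on the range of q_1 by m̂^{-1} := Σ_{k=1}^N (N/k) P_k (which is well-defined since q_1 P_0 = 0). Then for every bosonic unit vector Ψ ∈ h^⊗N, ⟨Ψ, m̂^{-1} q_1 q_2 Ψ⟩ ≤ (N/(N-1)) ⟨Ψ, m̂ Ψ⟩. -/
open scoped InnerProductSpace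
open Finset

/-- The excitation-number projection `P k` associated with a family of one-body
projections `p i` (with `q i = 1 - p i`) on the `N`-fold tensor product:
`P k = Σ_{a ∈ {0,1}^N, Σ a = k} Π_i p_i^{1-a_i} q_i^{a_i}`. -/
noncomputable def excitProj {H : Type*} [NormedAddCommGroup H] [InnerProductSpace ℂ H]
    {N : ℕ} (p : Fin N → (H →L[ℂ] H)) (k : ℕ) : H →L[ℂ] H :=
  ∑ a ∈ Finset.univ.filter
      (fun a : Fin N → Bool => (Finset.univ.filter (fun i => a i = true)).card = k),
    (List.ofFn (fun i => if a i then 1 - p i else p i)).prod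

/-! Expand each `P k` into the configuration projections `P_a = ∏ i, (q i if a i else p i)`,
`a : Fin N → Bool` with `k` entries `true`. Then `P_a q₀ q₁` is `P_a` when `a 0 = a 1 = true` and `0`
otherwise. The numbers `⟨Ψ, P_a Ψ⟩` are nonnegative and, since `Ψ` is symmetric, invariant under
permuting `a`; counting ordered pairs of distinct excited sites in two ways gives
`N (N - 1) Σ_{|a| = k, a 0 = a 1 = true} ⟨Ψ, P_a Ψ⟩ = k (k - 1) ⟨Ψ, P_k Ψ⟩`.
So the left side is `Σ_k (k - 1)/(N - 1) ⟨Ψ, P_k Ψ⟩ ≤ N/(N - 1) Σ_k (k/N) ⟨Ψ, P_k Ψ⟩`. -/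

section Combinatorics

lemma Equiv.Perm.exists_apply_eq_apply_eq {α : Type*} [DecidableEq α] {i j i' j' : α}
    (h : i ≠ j) (h' : i' ≠ j') : ∃ σ : Equiv.Perm α, σ i = i' ∧ σ j = j' := by
  set τ := Equiv.swap i i'
  have hτ : τ j ≠ i' := fun e => h (τ.injective (e.trans (Equiv.swap_apply_left i i').symm)).symm
  refine ⟨Equiv.swap (τ j) j' * τ, ?_, ?_⟩ <;> rw [Equiv.Perm.mul_apply]
  · rw [Equiv.swap_apply_left]
    exact Equiv.swap_apply_of_ne_of_ne hτ.symm h'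
  · exact Equiv.swap_apply_left _ _

lemma card_filter_comp_perm {α : Type*} [Fintype α] (a : α → Bool) (σ : Equiv.Perm α) :
    #{i | (a ∘ σ) i} = #{i | a i} :=
  card_equiv σ (by simp)

lemma Nat.cast_mul_sub_one {R : Type*} [Ring R] (n : ℕ) :
    ((n * (n - 1) : ℕ) : R) = n * (n - 1) := by
  cases n <;> simp

def excitConfigs (α : Type*) [Fintype α] [DecidableEq α] (k : ℕ) : Finset (α → Bool) :=
  univ.filter fun a => #{i | a i = true} = k

variable {α : Type*} [Fintype α] [DecidableEq α]

section PermInvariant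

variable {M : Type*} [AddCommMonoid M] {c : (α → Bool) → M}

lemma sum_filter_pair_eq_of_perm_invariant (hc : ∀ (σ : Equiv.Perm α) a, c (a ∘ σ) = c a)
    {i j i' j' : α} (h : i ≠ j) (h' : i' ≠ j') :
    ∑ a with a i ∧ a j, c a = ∑ a with a i' ∧ a j', c a := by
  obtain ⟨σ, rfl, rfl⟩ := Equiv.Perm.exists_apply_eq_apply_eq h' h
  simp only [sum_filter]
  exact Fintype.sum_bijective (· ∘ σ) (σ.arrowCongr (Equiv.refl Bool)).symm.bijective _ _
    fun a => by simp [hc]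

lemma card_mul_sum_filter_pair (hc : ∀ (σ : Equiv.Perm α) a, c (a ∘ σ) = c a)
    {i j : α} (h : i ≠ j) :
    (Fintype.card α * (Fintype.card α - 1)) • ∑ a with a i ∧ a j, c a =
      ∑ a, (#{k | a k} * (#{k | a k} - 1)) • c a := by
  have hpairs : ∀ x ∈ (univ : Finset α).offDiag,
      ∑ a with a x.1 ∧ a x.2, c a = ∑ a with a i ∧ a j, c a := fun x hx =>
    sum_filter_pair_eq_of_perm_invariant hc (mem_offDiag.mp hx).2.2 h
  have hcount : ∀ a : α → Bool, #((univ : Finset α).offDiag.filter fun x => a x.1 ∧ a x.2) =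
      #{k | a k} * (#{k | a k} - 1) := fun a => by
    rw [Nat.mul_sub_one, ← offDiag_card]
    congr 1
    ext x
    simp only [mem_filter, mem_offDiag, mem_univ, true_and]
    tauto
  calc (Fintype.card α * (Fintype.card α - 1)) • ∑ a with a i ∧ a j, c a
      = ∑ x ∈ (univ : Finset α).offDiag, ∑ a with a x.1 ∧ a x.2, c a := by
        rw [sum_congr rfl hpairs, sum_const, offDiag_card, card_univ, Nat.mul_sub_one]
    _ = ∑ a, (#{k | a k} * (#{k | a k} - 1)) • c a := by
        simp only [sum_filter]
        rw [sum_comm]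
        refine sum_congr rfl fun a _ => ?_
        rw [← sum_filter, sum_const, hcount]

end PermInvariant

variable {c : (α → Bool) → ℝ}

lemma card_mul_sum_excitConfigs_pair (hc : ∀ (σ : Equiv.Perm α) a, c (a ∘ σ) = c a)
    {i j : α} (h : i ≠ j) (k : ℕ) :
    Fintype.card α * (Fintype.card α - 1) * ∑ a ∈ excitConfigs α k with a i ∧ a j, c a =
      k * (k - 1) * ∑ a ∈ excitConfigs α k, c a := by
  have hck : ∀ (σ : Equiv.Perm α) (a : α → Bool),
      (if #{i | (a ∘ σ) i} = k then c (a ∘ σ) else 0) = if #{i | a i} = k then c a else 0 :=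
    fun σ a => by rw [card_filter_comp_perm, hc]
  have := card_mul_sum_filter_pair (c := fun a => if #{i | a i} = k then c a else 0) hck h
  simp only [nsmul_eq_mul, Nat.cast_mul_sub_one, mul_ite, mul_zero, ← sum_filter] at this
  have hfilter : ∑ a ∈ excitConfigs α k with a i ∧ a j, c a =
      ∑ a ∈ ({a | a i ∧ a j} : Finset (α → Bool)) with #{l | a l} = k, c a := by
    simp only [excitConfigs, filter_filter, and_comm]
  rw [hfilter, this, excitConfigs, mul_sum]
  exact sum_congr rfl fun a ha => by rw [(mem_filter.mp ha).2]

lemma sum_excitConfigs_pair_le (hc₀ : ∀ a, 0 ≤ c a)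
    (hc : ∀ (σ : Equiv.Perm α) a, c (a ∘ σ) = c a) {i j : α} (h : i ≠ j) :
    ∑ k ∈ Icc 1 (Fintype.card α),
        (Fintype.card α / k : ℝ) * ∑ a ∈ excitConfigs α k with a i ∧ a j, c a ≤
      Fintype.card α / (Fintype.card α - 1) *
        ∑ k ∈ range (Fintype.card α + 1),
          (k / Fintype.card α : ℝ) * ∑ a ∈ excitConfigs α k, c a := by
  set n := Fintype.card α
  have hn : (1 : ℝ) < n := by exact_mod_cast Fintype.one_lt_card_iff.mpr ⟨i, j, h⟩
  have hn₁ : (n : ℝ) - 1 ≠ 0 := by linarith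
  have hterm : ∀ k ∈ Icc 1 n, (n / k : ℝ) * ∑ a ∈ excitConfigs α k with a i ∧ a j, c a ≤
      n / (n - 1) * ((k / n : ℝ) * ∑ a ∈ excitConfigs α k, c a) := fun k hk => by
    have hk : (1 : ℝ) ≤ k := by exact_mod_cast (mem_Icc.mp hk).1
    have hk₀ : (k : ℝ) ≠ 0 := by linarith
    have hS : 0 ≤ ∑ a ∈ excitConfigs α k, c a := sum_nonneg fun a _ => hc₀ a
    have hpair := card_mul_sum_excitConfigs_pair hc h k
    calc (n / k : ℝ) * ∑ a ∈ excitConfigs α k with a i ∧ a j, c a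
        = (k - 1) / (n - 1) * ∑ a ∈ excitConfigs α k, c a := by
          field_simp
          linear_combination hpair
      _ ≤ k / (n - 1) * ∑ a ∈ excitConfigs α k, c a := by gcongr; linarith
      _ = n / (n - 1) * ((k / n : ℝ) * ∑ a ∈ excitConfigs α k, c a) := by field_simp
  calc _ ≤ ∑ k ∈ Icc 1 n, n / (n - 1) * ((k / n : ℝ) * ∑ a ∈ excitConfigs α k, c a) :=
        sum_le_sum hterm
    _ ≤ ∑ k ∈ range (n + 1), n / (n - 1) * ((k / n : ℝ) * ∑ a ∈ excitConfigs α k, c a) := by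
        refine sum_le_sum_of_subset_of_nonneg (fun k hk => ?_) fun k _ _ => ?_
        · simp only [mem_range, mem_Icc] at hk ⊢; omega
        · have hn₀ : (0 : ℝ) ≤ n - 1 := by linarith
          have hS : 0 ≤ ∑ a ∈ excitConfigs α k, c a := sum_nonneg fun a _ => hc₀ a
          positivity
    _ = _ := by rw [mul_sum]

end Combinatorics

section ConfigProj

variable {R : Type*} [Ring R] {N : ℕ} {p : Fin N → R}

def configFactor (p : Fin N → R) (a : Fin N → Bool) (i : Fin N) : R :=
  if a i then 1 - p i else p i

def configProj (p : Fin N → R) (a : Fin N → Bool) : R :=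
  (List.ofFn (configFactor p a)).prod

lemma commute_configFactor (hcomm : ∀ i j, Commute (p i) (p j)) (a b : Fin N → Bool)
    (i j : Fin N) : Commute (configFactor p a i) (configFactor p b j) := by
  have h₁ : Commute (1 - p i) (p j) := (Commute.one_left _).sub_left (hcomm i j)
  have h₂ : Commute (p i) (1 - p j) := (Commute.one_right _).sub_right (hcomm i j)
  unfold configFactor
  split_ifs
  exacts [(Commute.one_right _).sub_right h₁, h₁, h₂, hcomm i j]

lemma pairwise_commute_configFactor (hcomm : ∀ i j, Commute (p i) (p j)) (a : Fin N → Bool) :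
    (List.ofFn (configFactor p a)).Pairwise Commute :=
  List.pairwise_ofFn.mpr fun i j _ => commute_configFactor hcomm a a i j

lemma configProj_comp_perm (hcomm : ∀ i j, Commute (p i) (p j)) (σ : Equiv.Perm (Fin N))
    (a : Fin N → Bool) : configProj (p ∘ σ) (a ∘ σ) = configProj p a :=
  (σ.ofFn_comp_perm _).prod_eq' ((List.Perm.pairwise_iff Commute.symm (σ.ofFn_comp_perm _)).mpr
    (pairwise_commute_configFactor hcomm a))

lemma map_configProj {S F : Type*} [Ring S] [FunLike F R S] [RingHomClass F R S] (φ : F)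
    (p : Fin N → R) (a : Fin N → Bool) : φ (configProj p a) = configProj (φ ∘ p) a := by
  simp only [configProj, map_list_prod, List.map_ofFn]
  congr 2
  ext i
  simp only [Function.comp_apply, configFactor, apply_ite φ, map_sub, map_one]

lemma configProj_mul_one_sub (hidem : ∀ i, IsIdempotentElem (p i))
    (hcomm : ∀ i j, Commute (p i) (p j)) (a : Fin N → Bool) (j : Fin N) :
    configProj p a * (1 - p j) = if a j then configProj p a else 0 := by
  classical
  set l := List.ofFn (configFactor p a)
  have hmem : configFactor p a j ∈ l := List.mem_ofFn.mpr ⟨j, rfl⟩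
  have hl : ∀ x ∈ l, ∀ y ∈ l, x * y = y * x := fun x hx y hy => by
    obtain ⟨i, rfl⟩ := List.mem_ofFn.mp hx
    obtain ⟨i', rfl⟩ := List.mem_ofFn.mp hy
    exact commute_configFactor hcomm a a i i'
  have hrest : Commute (l.erase (configFactor p a j)).prod (1 - p j) := by
    refine Commute.list_prod_left _ _ fun x hx => ?_
    obtain ⟨i, rfl⟩ := List.mem_ofFn.mp (List.mem_of_mem_erase hx)
    exact commute_configFactor hcomm a (fun _ => true) i j
  have hfactor : configFactor p a j * (1 - p j) = if a j then configFactor p a j else 0 := by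
    unfold configFactor
    split_ifs
    exacts [(hidem j).one_sub.eq, (hidem j).mul_one_sub_self]
  rw [configProj, ← List.prod_erase_of_comm hmem hl, mul_assoc, hrest.eq, ← mul_assoc, hfactor]
  split_ifs <;> simp

lemma IsStarProjection.list_prod [StarRing R] {l : List R} (hl : ∀ x ∈ l, IsStarProjection x)
    (hc : l.Pairwise Commute) : IsStarProjection l.prod := by
  induction l with
  | nil => exact .one R
  | cons x l ih =>
    rw [List.pairwise_cons] at hc
    rw [List.prod_cons]
    exact (hl x List.mem_cons_self).mul (ih (fun y hy => hl y (List.mem_cons_of_mem x hy)) hc.2)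
      (Commute.list_prod_right _ _ hc.1)

lemma isStarProjection_configProj [StarRing R] (hp : ∀ i, IsStarProjection (p i))
    (hcomm : ∀ i j, Commute (p i) (p j)) (a : Fin N → Bool) : IsStarProjection (configProj p a) :=
  .list_prod (fun x hx => by
      obtain ⟨i, rfl⟩ := List.mem_ofFn.mp hx
      unfold configFactor
      split_ifs
      exacts [(hp i).one_sub, hp i])
    (pairwise_commute_configFactor hcomm a)

lemma conj_configProj_comp_perm [StarRing R] (hcomm : ∀ i j, Commute (p i) (p j)) {u : R}
    (hu : u ∈ unitary R) {σ : Equiv.Perm (Fin N)} (hup : ∀ i, u * p i = p (σ i) * u)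
    (a : Fin N → Bool) : u * configProj p (a ∘ σ) * star u = configProj p a := by
  have hconj := map_configProj (Unitary.conjStarAlgAut ℕ R ⟨u, hu⟩) p (a ∘ σ)
  simp only [Unitary.conjStarAlgAut_apply] at hconj
  rw [hconj, ← configProj_comp_perm hcomm σ a]
  congr 1
  ext i
  simp [hup, mul_assoc, Unitary.mul_star_self_of_mem hu]

end ConfigProj

section Hilbert

variable {H : Type*} [NormedAddCommGroup H] [InnerProductSpace ℂ H]

lemma excitProj_eq_sum_configProj {N : ℕ} (p : Fin N → (H →L[ℂ] H)) (k : ℕ) :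
    excitProj p k = ∑ a ∈ excitConfigs (Fin N) k, configProj p a :=
  rfl

lemma excitProj_mul_one_sub_mul_one_sub {N : ℕ} {p : Fin N → (H →L[ℂ] H)}
    (hidem : ∀ i, IsIdempotentElem (p i)) (hcomm : ∀ i j, Commute (p i) (p j)) (k : ℕ)
    (i j : Fin N) :
    excitProj p k * ((1 - p i) * (1 - p j)) =
      ∑ a ∈ excitConfigs (Fin N) k with a i ∧ a j, configProj p a := by
  rw [excitProj_eq_sum_configProj, sum_mul, sum_filter]
  refine sum_congr rfl fun a _ => ?_
  rw [← mul_assoc, configProj_mul_one_sub hidem hcomm]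
  by_cases hi : a i <;> simp [hi, configProj_mul_one_sub hidem hcomm]

lemma inner_conj_apply_of_apply_eq [CompleteSpace H] {u : H →L[ℂ] H} (hu : star u * u = 1)
    {Ψ : H} (hΨ : u Ψ = Ψ) (T : H →L[ℂ] H) : ⟪Ψ, (u * T * star u) Ψ⟫_ℂ = ⟪Ψ, T Ψ⟫_ℂ := by
  have hΨ' : star u Ψ = Ψ := by simpa [hΨ] using DFunLike.congr_fun hu Ψ
  change ⟪Ψ, u (T (star u Ψ))⟫_ℂ = _
  rw [ContinuousLinearMap.star_eq_adjoint, ← ContinuousLinearMap.adjoint_inner_left,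
    ← ContinuousLinearMap.star_eq_adjoint, hΨ']

lemma re_inner_sum_smul_sum_apply {ι κ : Type*} (s : Finset ι) (r : ι → ℝ) (t : ι → Finset κ)
    (T : κ → H →L[ℂ] H) (Ψ : H) :
    (⟪Ψ, (∑ k ∈ s, (r k : ℂ) • ∑ a ∈ t k, T a) Ψ⟫_ℂ).re =
      ∑ k ∈ s, r k * ∑ a ∈ t k, (⟪Ψ, T a Ψ⟫_ℂ).re := by
  simp [Complex.re_sum]

end Hilbert

theorem stmt_5 {H : Type*} [NormedAddCommGroup H] [InnerProductSpace ℂ H] [CompleteSpace H]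
    {N : ℕ} (hN : 2 ≤ N) (p : Fin N → (H →L[ℂ] H))
    (hidem : ∀ i, IsIdempotentElem (p i)) (hsa : ∀ i, IsSelfAdjoint (p i))
    (hcomm : ∀ i j, Commute (p i) (p j))
    -- the permutation symmetry structure of the tensor product
    (U : Equiv.Perm (Fin N) → (H →L[ℂ] H))
    (hUunit : ∀ π, U π * star (U π) = 1 ∧ star (U π) * U π = 1)
    (hUp : ∀ π i, U π * p i = p (π i) * U π)
    -- the bosonic (permutation-symmetric) unit vector
    (Ψ : H) (hsym : ∀ π, U π Ψ = Ψ) :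
    (inner ℂ Ψ (((∑ k ∈ Finset.Icc 1 N, ((N : ℂ) / k) • excitProj p k) *
          ((1 - p ⟨0, by omega⟩) * (1 - p ⟨1, by omega⟩))) Ψ) : ℂ).re ≤
      ((N : ℝ) / (N - 1)) *
        (inner ℂ Ψ ((∑ k ∈ Finset.range (N + 1), ((k : ℂ) / N) • excitProj p k) Ψ) : ℂ).re := by
  set c : (Fin N → Bool) → ℝ := fun a => (⟪Ψ, configProj p a Ψ⟫_ℂ).re
  have hc₀ : ∀ a, 0 ≤ c a := fun a =>
    (ContinuousLinearMap.IsPositive.of_isStarProjection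
      (isStarProjection_configProj (fun i => ⟨hidem i, hsa i⟩) hcomm a)).re_inner_nonneg_right Ψ
  have hc : ∀ (π : Equiv.Perm (Fin N)) a, c (a ∘ π) = c a := fun π a => by
    have hu : U π ∈ unitary (H →L[ℂ] H) := Unitary.mem_iff.mpr ⟨(hUunit π).2, (hUunit π).1⟩
    simp only [c, ← conj_configProj_comp_perm hcomm hu (hUp π) a,
      inner_conj_apply_of_apply_eq (hUunit π).2 (hsym π)]
  simp only [sum_mul, smul_mul_assoc, excitProj_mul_one_sub_mul_one_sub hidem hcomm]
  simp only [excitProj_eq_sum_configProj, ← Complex.ofReal_natCast, ← Complex.ofReal_div,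
    re_inner_sum_smul_sum_apply]
  simpa only [Fintype.card_fin] using
    sum_excitConfigs_pair_le hc₀ hc (i := ⟨0, by omega⟩) (j := ⟨1, by omega⟩) (by simp)
end

section
/- Let p be an orthogonal projection on a Hilbert space h, let A be a bounded self-adjoint operator on h⊗h, and suppose Q_a, Q_b are finite tensor products of copies of p and q = 1-p acting on the first two factors of h^⊗N, with d equal to the number of q's in Q_b minus the number of q's in Q_a. Let f̂ := Σ_{k=0}^N f(k) P_k and f̂_d := Σ_{k=0}^N f(k+d) P_k for a function f: ℤ → ℝ (with P_k = 0 outside {0,...,N}). Then Q_a A_{12} f̂ Q_b = Q_a f̂_d A_{12} Q_b, where A_{12} acts as A on the first two factors. -/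
open scoped InnerProductSpace
open Finset

/-- The weighted operator `f̂ = Σ_{k=0}^N f(k) P_k` for `f : ℤ → ℝ`. -/
noncomputable def weightedOp {H : Type*} [NormedAddCommGroup H] [InnerProductSpace ℂ H]
    {N : ℕ} (p : Fin N → (H →L[ℂ] H)) (f : ℤ → ℝ) : H →L[ℂ] H :=
  ∑ k ∈ Finset.range (N + 1), ((f k : ℂ)) • excitProj p k

/-- A slot operator: `q i = 1 - p i` if the Boolean flag is `true`, `p i` otherwise. -/
noncomputable def slotOp {H : Type*} [NormedAddCommGroup H] [InnerProductSpace ℂ H]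
    {N : ℕ} (p : Fin N → (H →L[ℂ] H)) (c : Bool) (i : Fin N) : H →L[ℂ] H :=
  if c then 1 - p i else p i



section Aux
variable {H : Type*} [NormedAddCommGroup H] [InnerProductSpace ℂ H]
variable {M : ℕ}

noncomputable def auxT (p : Fin (M+2) → (H →L[ℂ] H)) (a : Fin (M+2) → Bool) : H →L[ℂ] H :=
  (List.ofFn (fun i => slotOp p (a i) i)).prod

noncomputable def auxR (p : Fin (M+2) → (H →L[ℂ] H)) (a : Fin (M+2) → Bool) : H →L[ℂ] H :=
  (List.ofFn (fun i : Fin M => slotOp p (a i.succ.succ) i.succ.succ)).prod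

def auxWt {N : ℕ} (a : Fin N → Bool) : ℕ := (Finset.univ.filter (fun i => a i = true)).card

variable {p : Fin (M+2) → (H →L[ℂ] H)}

theorem auxT_eq (p : Fin (M+2) → (H →L[ℂ] H)) (a : Fin (M+2) → Bool) :
    auxT p a = slotOp p (a ⟨0, by omega⟩) ⟨0, by omega⟩ *
      (slotOp p (a ⟨1, by omega⟩) ⟨1, by omega⟩ * auxR p a) := by
  have h0 : (0 : Fin (M+2)) = ⟨0, by omega⟩ := by ext; simp
  have h1 : ((0 : Fin (M+1)).succ : Fin (M+2)) = ⟨1, by omega⟩ := by ext; simp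
  simp only [auxT, auxR, List.ofFn_succ, List.prod_cons, h0, h1]

theorem slot_comm (hcomm : ∀ i j, Commute (p i) (p j)) (c c' : Bool) (i j : Fin (M+2)) :
    Commute (slotOp p c i) (slotOp p c' j) := by
  have h : Commute (p i) (p j) := hcomm i j
  rcases c <;> rcases c' <;>
    simp only [slotOp, Bool.false_eq_true, if_false, if_true]
  · exact h
  · exact (Commute.one_right _).sub_right h
  · exact (Commute.one_left _).sub_left h
  · exact (Commute.one_left _).sub_left ((Commute.one_right _).sub_right h)

theorem slot_idem (hidem : ∀ i, IsIdempotentElem (p i)) (c : Bool) (i : Fin (M+2)) :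
    slotOp p c i * slotOp p c i = slotOp p c i := by
  rcases c <;> simp only [slotOp, Bool.false_eq_true, if_false, if_true]
  · exact hidem i
  · exact (hidem i).one_sub

theorem slot_mul_ne (hidem : ∀ i, IsIdempotentElem (p i)) {c c' : Bool} (h : c ≠ c')
    (i : Fin (M+2)) : slotOp p c i * slotOp p c' i = 0 := by
  have hpq : p i * (1 - p i) = 0 := by
    rw [mul_sub, mul_one, (hidem i).eq, sub_self]
  have hqp : (1 - p i) * p i = 0 := by
    rw [sub_mul, one_mul, (hidem i).eq, sub_self]
  rcases c <;> rcases c' <;> simp only [slotOp, Bool.false_eq_true, if_false, if_true] <;>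
    first
      | exact absurd rfl h
      | exact hpq
      | exact hqp

theorem commute_auxR {X : H →L[ℂ] H}
    (hX : ∀ i : Fin (M+2), 2 ≤ (i : ℕ) → ∀ c, Commute X (slotOp p c i))
    (a : Fin (M+2) → Bool) : Commute X (auxR p a) := by
  apply Commute.list_prod_right
  intro x hx
  rw [List.mem_ofFn] at hx
  obtain ⟨i, rfl⟩ := hx
  exact hX i.succ.succ (by simp [Fin.val_succ]) _

theorem A_comm_slot {A : H →L[ℂ] H} (hA : ∀ i : Fin (M+2), 2 ≤ (i : ℕ) → Commute A (p i)) :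
    ∀ i : Fin (M+2), 2 ≤ (i : ℕ) → ∀ c, Commute A (slotOp p c i) := by
  intro i hi c
  rcases c <;> simp only [slotOp, Bool.false_eq_true, if_false, if_true]
  · exact hA i hi
  · exact (Commute.one_right _).sub_right (hA i hi)

theorem slot_comm_slot (hcomm : ∀ i j, Commute (p i) (p j)) (c : Bool) (j : Fin (M+2)) :
    ∀ i : Fin (M+2), 2 ≤ (i : ℕ) → ∀ c', Commute (slotOp p c j) (slotOp p c' i) :=
  fun i _ c' => slot_comm hcomm c c' j i

theorem auxR_congr {a a' : Fin (M+2) → Bool}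
    (h : ∀ i : Fin M, a i.succ.succ = a' i.succ.succ) : auxR p a = auxR p a' := by
  unfold auxR
  have he : (fun i : Fin M => slotOp p (a i.succ.succ) i.succ.succ)
      = fun i => slotOp p (a' i.succ.succ) i.succ.succ := funext fun i => by rw [h i]
  rw [he]

theorem auxWt_le {N : ℕ} (a : Fin N → Bool) : auxWt a ≤ N :=
  (Finset.card_filter_le _ _).trans (by simp)

theorem auxWt_split (a : Fin (M+2) → Bool) :
    (auxWt a : ℤ) = (if a ⟨0, by omega⟩ then 1 else 0) + (if a ⟨1, by omega⟩ then 1 else 0)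
      + ((Finset.univ.filter (fun i : Fin M => a i.succ.succ = true)).card : ℤ) := by
  have h0 : (0 : Fin (M+2)) = ⟨0, by omega⟩ := by ext; simp
  have h1 : ((0 : Fin (M+1)).succ : Fin (M+2)) = ⟨1, by omega⟩ := by ext; simp
  unfold auxWt
  rw [Finset.card_filter, Fin.sum_univ_succ, Fin.sum_univ_succ, h0, h1, ← Finset.card_filter]
  push_cast [apply_ite (Nat.cast : ℕ → ℤ)]
  ring

end Aux
section Prod
variable {H : Type*} [NormedAddCommGroup H] [InnerProductSpace ℂ H]
variable {M : ℕ} {p : Fin (M+2) → (H →L[ℂ] H)}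
variable (hidem : ∀ i, IsIdempotentElem (p i)) (hcomm : ∀ i j, Commute (p i) (p j))
include hidem hcomm

-- abbreviations used below (indices 0 and 1)
local notation "ii0" => (⟨0, by omega⟩ : Fin (M+2))
local notation "ii1" => (⟨1, by omega⟩ : Fin (M+2))

theorem Q_idem (c c' : Bool) :
    (slotOp p c ii0 * slotOp p c' ii1) * (slotOp p c ii0 * slotOp p c' ii1)
      = slotOp p c ii0 * slotOp p c' ii1 := by
  rw [mul_assoc, (slot_comm hcomm c' c ii1 ii0).left_comm, ← mul_assoc,
    slot_idem hidem, slot_idem hidem]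

omit hidem in
/-- `T a = R a * Q_b` when `a` matches `b` on the first two slots. -/
theorem T_eq_R_mul (a : Fin (M+2) → Bool) (b₁ b₂ : Bool)
    (h0 : a ii0 = b₁) (h1 : a ii1 = b₂) :
    auxT p a = auxR p a * (slotOp p b₁ ii0 * slotOp p b₂ ii1) := by
  rw [auxT_eq p a, h0, h1, (commute_auxR (slot_comm_slot hcomm b₂ ii1) a).eq,
    (commute_auxR (slot_comm_slot hcomm b₁ ii0) a).left_comm]

/-- vanishing on the right: `T a * Q_b = 0` if `a` mismatches `b` on slot 0 or 1. -/
theorem T_mul_Q_eq_zero (a : Fin (M+2) → Bool) (b₁ b₂ : Bool)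
    (h : ¬(a ii0 = b₁ ∧ a ii1 = b₂)) :
    auxT p a * (slotOp p b₁ ii0 * slotOp p b₂ ii1) = 0 := by
  rw [auxT_eq p a]
  simp only [mul_assoc]
  by_cases h0 : a ii0 = b₁
  · have h1 : a ii1 ≠ b₂ := fun hh => h ⟨h0, hh⟩
    rw [(slot_comm hcomm b₁ b₂ ii0 ii1).eq,
      (commute_auxR (slot_comm_slot hcomm b₂ ii1) a).symm.left_comm,
      ← mul_assoc (slotOp p (a ii1) ii1) (slotOp p b₂ ii1),
      slot_mul_ne hidem h1, zero_mul, mul_zero]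
  · rw [(commute_auxR (slot_comm_slot hcomm b₁ ii0) a).symm.left_comm,
      (slot_comm hcomm (a ii1) b₁ ii1 ii0).left_comm,
      ← mul_assoc (slotOp p (a ii0) ii0) (slotOp p b₁ ii0),
      slot_mul_ne hidem h0, zero_mul]

/-- vanishing on the left: `Q_a * T a' = 0` on mismatch. -/
theorem Q_mul_T_eq_zero (a : Fin (M+2) → Bool) (a₁ a₂ : Bool)
    (h : ¬(a ii0 = a₁ ∧ a ii1 = a₂)) :
    (slotOp p a₁ ii0 * slotOp p a₂ ii1) * auxT p a = 0 := by
  rw [auxT_eq p a]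
  simp only [mul_assoc]
  by_cases h0 : a ii0 = a₁
  · have h1 : a ii1 ≠ a₂ := fun hh => h ⟨h0, hh⟩
    rw [(slot_comm hcomm (a ii0) (a ii1) ii0 ii1).left_comm,
      ← mul_assoc (slotOp p a₂ ii1) (slotOp p (a ii1) ii1),
      slot_mul_ne hidem (fun hh => h1 hh.symm)]
    simp
  · rw [(slot_comm hcomm a₂ (a ii0) ii1 ii0).left_comm,
      ← mul_assoc (slotOp p a₁ ii0) (slotOp p (a ii0) ii0),
      slot_mul_ne hidem (fun hh => h0 hh.symm)]
    simp

end Prod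
section Main
variable {H : Type*} [NormedAddCommGroup H] [InnerProductSpace ℂ H]
variable {M : ℕ} {p : Fin (M+2) → (H →L[ℂ] H)} {A : H →L[ℂ] H}
variable (hidem : ∀ i, IsIdempotentElem (p i)) (hcomm : ∀ i j, Commute (p i) (p j))
variable (hAcomm : ∀ i : Fin (M+2), 2 ≤ (i : ℕ) → Commute A (p i))

local notation "ii0" => (⟨0, by omega⟩ : Fin (M+2))
local notation "ii1" => (⟨1, by omega⟩ : Fin (M+2))

include hidem hcomm hAcomm in
theorem key_right (a : Fin (M+2) → Bool) (a₁ a₂ b₁ b₂ : Bool)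
    (h0 : a ii0 = b₁) (h1 : a ii1 = b₂) :
    (((slotOp p a₁ ii0 * slotOp p a₂ ii1) * A) * auxT p a)
        * (slotOp p b₁ ii0 * slotOp p b₂ ii1)
      = (((slotOp p a₁ ii0 * slotOp p a₂ ii1) * auxR p a) * A)
        * (slotOp p b₁ ii0 * slotOp p b₂ ii1) := by
  have hTQ : auxT p a * (slotOp p b₁ ii0 * slotOp p b₂ ii1)
      = auxR p a * (slotOp p b₁ ii0 * slotOp p b₂ ii1) := by
    rw [T_eq_R_mul hcomm a b₁ b₂ h0 h1, mul_assoc, Q_idem hidem hcomm]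
  rw [mul_assoc, hTQ, ← mul_assoc,
    mul_assoc (slotOp p a₁ ii0 * slotOp p a₂ ii1) A (auxR p a),
    (commute_auxR (A_comm_slot hAcomm) a).eq,
    ← mul_assoc (slotOp p a₁ ii0 * slotOp p a₂ ii1) (auxR p a) A]

include hidem hcomm in
theorem key_left (a : Fin (M+2) → Bool) (a₁ a₂ : Bool)
    (h0 : a ii0 = a₁) (h1 : a ii1 = a₂) (B : H →L[ℂ] H) :
    (((slotOp p a₁ ii0 * slotOp p a₂ ii1) * auxT p a) * A) * B
      = (((slotOp p a₁ ii0 * slotOp p a₂ ii1) * auxR p a) * A) * B := by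
  have hQR : Commute (slotOp p a₁ ii0 * slotOp p a₂ ii1) (auxR p a) :=
    Commute.mul_left (commute_auxR (slot_comm_slot hcomm a₁ ii0) a)
      (commute_auxR (slot_comm_slot hcomm a₂ ii1) a)
  have hQT : (slotOp p a₁ ii0 * slotOp p a₂ ii1) * auxT p a
      = (slotOp p a₁ ii0 * slotOp p a₂ ii1) * auxR p a := by
    rw [T_eq_R_mul hcomm a a₁ a₂ h0 h1, hQR.left_comm, Q_idem hidem hcomm]
    exact hQR.eq.symm
  rw [hQT]

include hidem hcomm hAcomm in
theorem aux_main (a₁ a₂ b₁ b₂ : Bool) (f : ℤ → ℝ) (d : ℤ)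
    (hd : d = (((if b₁ then 1 else 0) + (if b₂ then 1 else 0) : ℤ)
            - ((if a₁ then 1 else 0) + (if a₂ then 1 else 0) : ℤ))) :
    (slotOp p a₁ ii0 * slotOp p a₂ ii1) * A * weightedOp p f *
        (slotOp p b₁ ii0 * slotOp p b₂ ii1) =
      (slotOp p a₁ ii0 * slotOp p a₂ ii1) *
        weightedOp p (fun k => f (k + d)) * A *
        (slotOp p b₁ ii0 * slotOp p b₂ ii1) := by
  have hW : ∀ g : ℤ → ℝ, weightedOp p g
      = ∑ a : Fin (M+2) → Bool, (g (auxWt a) : ℂ) • auxT p a := by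
    intro g
    rw [← Finset.sum_fiberwise_of_maps_to (t := Finset.range (M + 2 + 1)) (g := auxWt)
      (fun a _ => Finset.mem_range.mpr (Nat.lt_succ_of_le (auxWt_le a)))
      (fun a => (g (auxWt a) : ℂ) • auxT p a)]
    unfold weightedOp excitProj
    refine Finset.sum_congr rfl fun k hk => ?_
    rw [Finset.smul_sum]
    refine Finset.sum_congr rfl fun a ha => ?_
    rw [(Finset.mem_filter.mp ha).2]
    rfl
  have hne10 : (ii1 : Fin (M+2)) ≠ ii0 := by simp [Fin.ext_iff]
  have hs0 : ∀ i : Fin M, (i.succ.succ : Fin (M+2)) ≠ ii0 := fun i => by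
    simp [Fin.ext_iff]
  have hs1 : ∀ i : Fin M, (i.succ.succ : Fin (M+2)) ≠ ii1 := fun i => by
    simp [Fin.ext_iff]
  have hLeft : (slotOp p a₁ ii0 * slotOp p a₂ ii1) * A * weightedOp p f *
        (slotOp p b₁ ii0 * slotOp p b₂ ii1)
      = ∑ a ∈ Finset.univ.filter (fun a : Fin (M+2) → Bool => a ii0 = b₁ ∧ a ii1 = b₂),
          (f (auxWt a) : ℂ) •
            ((((slotOp p a₁ ii0 * slotOp p a₂ ii1) * auxR p a) * A)
              * (slotOp p b₁ ii0 * slotOp p b₂ ii1)) := by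
    rw [hW f, Finset.mul_sum, Finset.sum_mul]
    simp only [mul_smul_comm, smul_mul_assoc]
    refine ((Finset.sum_subset (Finset.filter_subset _ _) ?_).symm).trans
      (Finset.sum_congr rfl ?_)
    · intro a _ hna
      rw [Finset.mem_filter] at hna
      have h : ¬(a ii0 = b₁ ∧ a ii1 = b₂) := fun hh => hna ⟨Finset.mem_univ _, hh⟩
      rw [mul_assoc, T_mul_Q_eq_zero hidem hcomm a b₁ b₂ h, mul_zero, smul_zero]
    · intro a ha
      rw [Finset.mem_filter] at ha
      exact congrArg _ (key_right hidem hcomm hAcomm a a₁ a₂ b₁ b₂ ha.2.1 ha.2.2)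
  have hRight : (slotOp p a₁ ii0 * slotOp p a₂ ii1) *
        weightedOp p (fun k => f (k + d)) * A *
        (slotOp p b₁ ii0 * slotOp p b₂ ii1)
      = ∑ a ∈ Finset.univ.filter (fun a : Fin (M+2) → Bool => a ii0 = a₁ ∧ a ii1 = a₂),
          (f ((auxWt a : ℤ) + d) : ℂ) •
            ((((slotOp p a₁ ii0 * slotOp p a₂ ii1) * auxR p a) * A)
              * (slotOp p b₁ ii0 * slotOp p b₂ ii1)) := by
    rw [hW (fun k => f (k + d)), Finset.mul_sum, Finset.sum_mul, Finset.sum_mul]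
    simp only [mul_smul_comm, smul_mul_assoc]
    refine ((Finset.sum_subset (Finset.filter_subset _ _) ?_).symm).trans
      (Finset.sum_congr rfl ?_)
    · intro a _ hna
      rw [Finset.mem_filter] at hna
      have h : ¬(a ii0 = a₁ ∧ a ii1 = a₂) := fun hh => hna ⟨Finset.mem_univ _, hh⟩
      rw [mul_assoc, Q_mul_T_eq_zero hidem hcomm a a₁ a₂ h, zero_mul, smul_zero]
    · intro a ha
      rw [Finset.mem_filter] at ha
      exact congrArg _ (key_left hidem hcomm a a₁ a₂ ha.2.1 ha.2.2 _)
  rw [hLeft, hRight]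
  refine Finset.sum_nbij'
    (fun a j => if j = ii0 then a₁ else if j = ii1 then a₂ else a j)
    (fun a j => if j = ii0 then b₁ else if j = ii1 then b₂ else a j)
    ?_ ?_ ?_ ?_ ?_
  · intro a _
    simp only [Finset.mem_filter, Finset.mem_univ, true_and]
    exact ⟨by simp, by simp⟩
  · intro a _
    simp only [Finset.mem_filter, Finset.mem_univ, true_and]
    exact ⟨by simp, by simp⟩
  · intro a ha
    rw [Finset.mem_filter] at ha
    funext j
    dsimp only
    rcases eq_or_ne j ii0 with rfl | hj0
    · rw [if_pos rfl]
      exact ha.2.1.symm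
    · rcases eq_or_ne j ii1 with rfl | hj1
      · rw [if_neg hne10, if_pos rfl]
        exact ha.2.2.symm
      · rw [if_neg hj0, if_neg hj1, if_neg hj0, if_neg hj1]
  · intro a ha
    rw [Finset.mem_filter] at ha
    funext j
    dsimp only
    rcases eq_or_ne j ii0 with rfl | hj0
    · rw [if_pos rfl]
      exact ha.2.1.symm
    · rcases eq_or_ne j ii1 with rfl | hj1
      · rw [if_neg hne10, if_pos rfl]
        exact ha.2.2.symm
      · rw [if_neg hj0, if_neg hj1, if_neg hj0, if_neg hj1]
  · intro a ha
    rw [Finset.mem_filter] at ha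
    have hRR : auxR p (fun j => if j = ii0 then a₁ else if j = ii1 then a₂ else a j)
        = auxR p a := auxR_congr fun i => by
      simp only [if_neg (hs0 i), if_neg (hs1 i)]
    have hwt : ((auxWt a : ℤ))
        = (auxWt (fun j => if j = ii0 then a₁ else if j = ii1 then a₂ else a j) : ℤ) + d := by
      rw [auxWt_split a,
        auxWt_split (fun j => if j = ii0 then a₁ else if j = ii1 then a₂ else a j)]
      have etail : (Finset.univ.filter (fun i : Fin M =>
            (if (i.succ.succ : Fin (M+2)) = ii0 then a₁
              else if (i.succ.succ : Fin (M+2)) = ii1 then a₂ else a i.succ.succ) = true)).card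
          = (Finset.univ.filter (fun i : Fin M => a i.succ.succ = true)).card := by
        refine congrArg Finset.card (Finset.filter_congr fun i _ => ?_)
        rw [if_neg (hs0 i), if_neg (hs1 i)]
      simp only [if_pos rfl, if_neg hne10, etail, ha.2.1, ha.2.2, hd]
      split_ifs <;> omega
    rw [hRR, ← hwt]
end Main

theorem stmt_6 {H : Type*} [NormedAddCommGroup H] [InnerProductSpace ℂ H] [CompleteSpace H]
    {N : ℕ} (hN : 2 ≤ N) (p : Fin N → (H →L[ℂ] H))
    (hidem : ∀ i, IsIdempotentElem (p i)) (hsa : ∀ i, IsSelfAdjoint (p i))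
    (hcomm : ∀ i j, Commute (p i) (p j))
    -- the two-body operator `A₁₂`, acting on the first two factors only
    (A : H →L[ℂ] H) (hA : IsSelfAdjoint A)
    (hAcomm : ∀ i : Fin N, 2 ≤ (i : ℕ) → Commute A (p i))
    -- the monomials `Q_a`, `Q_b` in `p`, `q` on the first two factors
    (a₁ a₂ b₁ b₂ : Bool) (f : ℤ → ℝ)
    (d : ℤ)
    (hd : d = (((if b₁ then 1 else 0) + (if b₂ then 1 else 0) : ℤ)
            - ((if a₁ then 1 else 0) + (if a₂ then 1 else 0) : ℤ))) :
    (slotOp p a₁ ⟨0, by omega⟩ * slotOp p a₂ ⟨1, by omega⟩) * A * weightedOp p f *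
        (slotOp p b₁ ⟨0, by omega⟩ * slotOp p b₂ ⟨1, by omega⟩) =
      (slotOp p a₁ ⟨0, by omega⟩ * slotOp p a₂ ⟨1, by omega⟩) *
        weightedOp p (fun k => f (k + d)) * A *
        (slotOp p b₁ ⟨0, by omega⟩ * slotOp p b₂ ⟨1, by omega⟩) := by
  obtain ⟨M, rfl⟩ : ∃ M, N = M + 2 := ⟨N - 2, by omega⟩
  exact aux_main hidem hcomm hAcomm a₁ a₂ b₁ b₂ f d hd
end
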